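/- arXiv:2406.01433 — 4 statements merged into one kernel-verified Lean document; each statement's English description precedes it below -/
import Mathlib

section
/- Let Φ : ℝ → [0,∞) be a differentiable N-function satisfying the Δ₂ condition globally. Let F : ℝ⁶ → [0,∞) be convex and of class C¹ with F(0) = 0, and write f = F' (the gradient of F). Assume f(u) = o(|u|) as u → 0 and that there exists c₁ > 0 with |f(u)| ≤ c₁·(1 + Φ'(|u|)) for all u ∈ ℝ⁶. Then for every ε > 0 there exists C_ε > 0 such that F(u) ≤ ε·|u|² + C_ε·Φ(|u|) for every u ∈ ℝ⁶. -/
/-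
For convex `F` with `F 0 = 0` the gradient inequality gives `F u ≤ ‖f u‖ ‖u‖`. Near the origin
`‖f u‖ ≤ ε ‖u‖` by the little-o hypothesis, so `F u ≤ ε ‖u‖²`. Away from the origin, say
`‖u‖ = t ≥ δ`, the growth bound gives `F u ≤ c₁ (t + Φ'(t) t)`; convexity of `Φ` with `Φ 0 = 0`
makes `Φ t / t` nondecreasing, so `t ≤ (δ / Φ δ) Φ t`, and convexity together with Δ₂ gives
`Φ'(t) t ≤ Φ (2t) - Φ t ≤ K Φ t`.
-/

open Filter

/-- An *N*-function: even, convex, nonnegative, positive away from zero,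
with `Φ t / t → 0` at `0` and `Φ t / t → ∞` at `∞`. -/
def IsNFunction (Φ : ℝ → ℝ) : Prop :=
  (∀ t, 0 ≤ Φ t) ∧ (∀ t, Φ (-t) = Φ t) ∧ ConvexOn ℝ Set.univ Φ ∧
  (∀ t, 0 < t → 0 < Φ t) ∧
  Tendsto (fun t => Φ t / t) (nhdsWithin (0 : ℝ) {0}ᶜ) (nhds 0) ∧
  Tendsto (fun t => Φ t / t) atTop atTop

/-- The global Δ₂ condition. -/
def Delta2 (Φ : ℝ → ℝ) : Prop := ∃ K > 0, ∀ t : ℝ, Φ (2 * t) ≤ K * Φ t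

/-- The global ∇₂ condition. -/
def Nabla2 (Φ : ℝ → ℝ) : Prop := ∃ K > 1, ∀ t : ℝ, 2 * K * Φ t ≤ Φ (K * t)

/-- The complementary function `Ψ t = sup { s * |t| - Φ s : s ≥ 0 }`. -/
noncomputable def complFn (Φ : ℝ → ℝ) (t : ℝ) : ℝ :=
  sSup ((fun s => s * |t| - Φ s) '' Set.Ici (0 : ℝ))

open Asymptotics

open Set Topology

theorem ConvexOn.fderiv_apply_sub_le {E : Type*} [NormedAddCommGroup E] [NormedSpace ℝ E]
    {F : E → ℝ} (hF : ConvexOn ℝ univ F) {x : E} (hx : DifferentiableAt ℝ F x) (y : E) :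
    fderiv ℝ F x (y - x) ≤ F y - F x := by
  set line : ℝ →ᵃ[ℝ] E := AffineMap.lineMap x y
  have hconv : ConvexOn ℝ univ (F ∘ line) := by simpa using hF.comp_affineMap line
  have hderiv : HasDerivAt (F ∘ line) (fderiv ℝ F x (y - x)) 0 := by
    refine HasFDerivAt.comp_hasDerivAt _ ?_ AffineMap.hasDerivAt_lineMap
    simpa [line] using hx.hasFDerivAt
  simpa [slope_def_field, line] using
    hconv.le_slope_of_hasDerivAt (mem_univ 0) (mem_univ 1) one_pos hderiv

theorem ConvexOn.le_norm_fderiv_mul_norm {E : Type*} [NormedAddCommGroup E] [NormedSpace ℝ E]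
    {F : E → ℝ} (hF : ConvexOn ℝ univ F) (hF0 : F 0 = 0) {u : E}
    (hu : DifferentiableAt ℝ F u) : F u ≤ ‖fderiv ℝ F u‖ * ‖u‖ := by
  have hgrad := hF.fderiv_apply_sub_le hu 0
  rw [hF0, zero_sub, map_neg] at hgrad
  calc F u ≤ fderiv ℝ F u u := by linarith
    _ ≤ ‖fderiv ℝ F u‖ * ‖u‖ := (le_abs_self _).trans ((fderiv ℝ F u).le_opNorm u)

theorem ConvexOn.deriv_mul_le_sub {Φ : ℝ → ℝ} (hΦ : ConvexOn ℝ univ Φ) {t : ℝ} (ht : 0 < t)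
    (hd : DifferentiableAt ℝ Φ t) : deriv Φ t * t ≤ Φ (2 * t) - Φ t := by
  have hslope := hΦ.deriv_le_slope (mem_univ t) (mem_univ (2 * t)) (by linarith) hd
  rwa [slope_def_field, show 2 * t - t = t by ring, le_div_iff₀ ht] at hslope

theorem ConvexOn.div_le_div_of_map_zero {Φ : ℝ → ℝ} (hΦ : ConvexOn ℝ univ Φ) (hΦ0 : Φ 0 = 0)
    {a t : ℝ} (ha : 0 < a) (hat : a ≤ t) : Φ a / a ≤ Φ t / t := by
  simpa [hΦ0] using hΦ.secant_mono (mem_univ 0) (mem_univ a) (mem_univ t) ha.ne'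
    (ha.trans_le hat).ne' hat

namespace IsNFunction

variable {Φ : ℝ → ℝ}

theorem map_zero (hN : IsNFunction Φ) : Φ 0 = 0 := by
  obtain ⟨-, -, hconv, -, hlim, -⟩ := hN
  have hcont : Tendsto Φ (𝓝[≠] 0) (𝓝 (Φ 0)) :=
    (hconv.continuousOn_interior.continuousAt (by simp)).tendsto.mono_left nhdsWithin_le_nhds
  have hzero : Tendsto Φ (𝓝[≠] 0) (𝓝 0) := by
    have hprod := hlim.mul (tendsto_id.mono_left nhdsWithin_le_nhds :
      Tendsto id (𝓝[≠] (0 : ℝ)) (𝓝 0))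
    rw [zero_mul] at hprod
    refine hprod.congr' ?_
    filter_upwards [self_mem_nhdsWithin] with t ht
    exact div_mul_cancel₀ _ ht
  exact tendsto_nhds_unique hcont hzero

theorem le_div_mul (hN : IsNFunction Φ) {a t : ℝ} (ha : 0 < a) (hat : a ≤ t) :
    t ≤ a / Φ a * Φ t := by
  have hΦa : 0 < Φ a := hN.2.2.2.1 a ha
  have hmono := hN.2.2.1.div_le_div_of_map_zero hN.map_zero ha hat
  rw [div_le_div_iff₀ ha (ha.trans_le hat)] at hmono
  rw [div_mul_eq_mul_div, le_div_iff₀ hΦa]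
  linarith

theorem deriv_mul_le {K : ℝ} (hN : IsNFunction Φ) (hK : ∀ t, Φ (2 * t) ≤ K * Φ t) {t : ℝ}
    (ht : 0 < t) (hd : DifferentiableAt ℝ Φ t) : deriv Φ t * t ≤ K * Φ t := by
  linarith [hN.2.2.1.deriv_mul_le_sub ht hd, hK t, hN.1 t]

theorem one_add_deriv_mul_le {K : ℝ} (hN : IsNFunction Φ) (hK : ∀ t, Φ (2 * t) ≤ K * Φ t)
    {a t : ℝ} (ha : 0 < a) (hat : a ≤ t) (hd : DifferentiableAt ℝ Φ t) :
    (1 + deriv Φ t) * t ≤ (a / Φ a + K) * Φ t := by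
  linarith [hN.le_div_mul ha hat, hN.deriv_mul_le hK (ha.trans_le hat) hd]

end IsNFunction

theorem stmt11_general (Φ : ℝ → ℝ) (hN : IsNFunction Φ) (hΦdiff : Differentiable ℝ Φ)
    (hΔ : Delta2 Φ)
    (F : EuclideanSpace ℝ (Fin 6) → ℝ)
    (hFconv : ConvexOn ℝ Set.univ F) (hFC1 : ContDiff ℝ 1 F) (hF0 : F 0 = 0)
    (hlittle : (fun u => fderiv ℝ F u) =o[nhds 0] (fun u : EuclideanSpace ℝ (Fin 6) => u))
    (c₁ : ℝ) (hc₁ : 0 < c₁)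
    (hgrowth : ∀ u, ‖fderiv ℝ F u‖ ≤ c₁ * (1 + deriv Φ ‖u‖)) :
    ∀ ε > 0, ∃ C > 0, ∀ u, F u ≤ ε * ‖u‖ ^ 2 + C * Φ ‖u‖ := by
  intro ε hε
  obtain ⟨K, hKpos, hK⟩ := hΔ
  obtain ⟨δ, hδ, hsmall⟩ := Metric.eventually_nhds_iff.mp (hlittle.def hε)
  have hΦδ : 0 < Φ δ := hN.2.2.2.1 δ hδ
  refine ⟨c₁ * (δ / Φ δ + K), by positivity, fun u => ?_⟩
  have hgrad := hFconv.le_norm_fderiv_mul_norm hF0 (hFC1.differentiable one_ne_zero u)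
  have hΦu : 0 ≤ Φ ‖u‖ := hN.1 ‖u‖
  rcases lt_or_ge ‖u‖ δ with hu | hu
  · have hfu : ‖fderiv ℝ F u‖ ≤ ε * ‖u‖ := hsmall (by simpa using hu)
    calc F u ≤ ε * ‖u‖ * ‖u‖ := hgrad.trans (by gcongr)
      _ = ε * ‖u‖ ^ 2 := by ring
      _ ≤ ε * ‖u‖ ^ 2 + c₁ * (δ / Φ δ + K) * Φ ‖u‖ :=
          le_add_of_nonneg_right (mul_nonneg (by positivity) hΦu)
  · calc F u ≤ c₁ * (1 + deriv Φ ‖u‖) * ‖u‖ := hgrad.trans (by gcongr; exact hgrowth u)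
      _ ≤ c₁ * (δ / Φ δ + K) * Φ ‖u‖ := by
          rw [mul_assoc, mul_assoc]
          exact mul_le_mul_of_nonneg_left (hN.one_add_deriv_mul_le hK hδ hu (hΦdiff _)) hc₁.le
      _ ≤ ε * ‖u‖ ^ 2 + c₁ * (δ / Φ δ + K) * Φ ‖u‖ := le_add_of_nonneg_left (by positivity)

/-- Assumptions (F0)-(F2) imply the estimate `F u ≤ ε |u|² + C_ε Φ(|u|)`. -/
theorem stmt11 (Φ : ℝ → ℝ) (hN : IsNFunction Φ) (hΦdiff : Differentiable ℝ Φ)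
    (hΔ : Delta2 Φ)
    (F : EuclideanSpace ℝ (Fin 6) → ℝ) (hFpos : ∀ u, 0 ≤ F u)
    (hFconv : ConvexOn ℝ Set.univ F) (hFC1 : ContDiff ℝ 1 F) (hF0 : F 0 = 0)
    (hlittle : (fun u => fderiv ℝ F u) =o[nhds 0] (fun u : EuclideanSpace ℝ (Fin 6) => u))
    (c₁ : ℝ) (hc₁ : 0 < c₁)
    (hgrowth : ∀ u, ‖fderiv ℝ F u‖ ≤ c₁ * (1 + deriv Φ ‖u‖)) :
    ∀ ε > 0, ∃ C > 0, ∀ u, F u ≤ ε * ‖u‖ ^ 2 + C * Φ ‖u‖ :=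
  stmt11_general Φ hN hΦdiff hΔ F hFconv hFC1 hF0 hlittle c₁ hc₁ hgrowth
end

section
/- Fix k ∈ ℝ, k ≠ 0. Let u : ℝ² → ℝ⁶ be of class C¹, let g ∈ SO(2) be a rotation of ℝ², and define (g⋆u)(x) := g̃·u(g⁻¹x), where g̃ ∈ ℝ^{6×6} is the block-diagonal matrix diag(g, 1, g, 1). Then for every x ∈ ℝ², |curl∘(g⋆u)(x)| = |curl∘u(g⁻¹x)|, where |·| is the Euclidean norm on ℝ⁶. -/
/-- First partial derivative of a function on ℝ². -/
noncomputable def pd1 (f : ℝ × ℝ → ℝ) (x : ℝ × ℝ) : ℝ := fderiv ℝ f x (1, 0)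

/-- Second partial derivative of a function on ℝ². -/
noncomputable def pd2 (f : ℝ × ℝ → ℝ) (x : ℝ × ℝ) : ℝ := fderiv ℝ f x (0, 1)

/-- The operator `curl∘` acting on fields `u : ℝ² → ℝ⁶`, with wave number `k`. -/
noncomputable def curlC (k : ℝ) (u : ℝ × ℝ → Fin 6 → ℝ) (x : ℝ × ℝ) : Fin 6 → ℝ :=
  ![pd2 (fun y => u y 2) x - k * u x 4,
    k * u x 3 - pd1 (fun y => u y 2) x,
    pd1 (fun y => u y 1) x - pd2 (fun y => u y 0) x,
    pd2 (fun y => u y 5) x + k * u x 1,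
    -(k * u x 0) - pd1 (fun y => u y 5) x,
    pd1 (fun y => u y 4) x - pd2 (fun y => u y 3) x]

/-- Rotation of ℝ² by the angle θ. -/
noncomputable def rot (θ : ℝ) (x : ℝ × ℝ) : ℝ × ℝ :=
  (x.1 * Real.cos θ - x.2 * Real.sin θ, x.1 * Real.sin θ + x.2 * Real.cos θ)

/-- The action `g ⋆ u` of the rotation by θ on a field `u : ℝ² → ℝ⁶`,
i.e. `(g ⋆ u)(x) = diag(g,1,g,1) · u (g⁻¹ x)`. -/
noncomputable def gstar (θ : ℝ) (u : ℝ × ℝ → Fin 6 → ℝ) (x : ℝ × ℝ) : Fin 6 → ℝ :=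
  ![Real.cos θ * u (rot (-θ) x) 0 - Real.sin θ * u (rot (-θ) x) 1,
    Real.sin θ * u (rot (-θ) x) 0 + Real.cos θ * u (rot (-θ) x) 1,
    u (rot (-θ) x) 2,
    Real.cos θ * u (rot (-θ) x) 3 - Real.sin θ * u (rot (-θ) x) 4,
    Real.sin θ * u (rot (-θ) x) 3 + Real.cos θ * u (rot (-θ) x) 4,
    u (rot (-θ) x) 5]

/-!
The operator `curl∘` is equivariant: `curl∘ (g ⋆ u) (x) = g̃ · curl∘ u (g⁻¹ x)`. By the chain rule
the gradient of `f ∘ g⁻¹` at `x` is `g` applied to the gradient of `f` at `g⁻¹ x`, so the pairs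
`(∂₂f, -∂₁f)` and `(u₁, u₂)`, `(u₄, u₅)` all turn by `g`, while the planar curls `∂₁v₂ - ∂₂v₁` are
unchanged since `det g = 1`. As `g̃` is orthogonal, the Euclidean norms agree.
-/

open Real

/-- The matrix `g̃ = diag(g, 1, g, 1)`, for `g` the rotation by `θ`. -/
noncomputable def blockRot (θ : ℝ) (v : Fin 6 → ℝ) : Fin 6 → ℝ :=
  ![cos θ * v 0 - sin θ * v 1, sin θ * v 0 + cos θ * v 1, v 2,
    cos θ * v 3 - sin θ * v 4, sin θ * v 3 + cos θ * v 4, v 5]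

lemma sum_sq_blockRot (θ : ℝ) (v : Fin 6 → ℝ) : ∑ i, blockRot θ v i ^ 2 = ∑ i, v i ^ 2 := by
  simp only [blockRot, Fin.sum_univ_six, Matrix.cons_val_zero, Matrix.cons_val_one,
    Matrix.cons_val, add_left_inj]
  linear_combination (v 0 ^ 2 + v 1 ^ 2 + v 3 ^ 2 + v 4 ^ 2) * sin_sq_add_cos_sq θ

noncomputable def rotCLM (θ : ℝ) : ℝ × ℝ →L[ℝ] ℝ × ℝ :=
  (cos θ • ContinuousLinearMap.fst ℝ ℝ ℝ - sin θ • ContinuousLinearMap.snd ℝ ℝ ℝ).prod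
    (sin θ • ContinuousLinearMap.fst ℝ ℝ ℝ + cos θ • ContinuousLinearMap.snd ℝ ℝ ℝ)

lemma coe_rotCLM (θ : ℝ) : ⇑(rotCLM θ) = rot θ := by
  ext x <;> simp [rotCLM, rot, mul_comm]

lemma hasFDerivAt_rot (θ : ℝ) (x : ℝ × ℝ) : HasFDerivAt (rot θ) (rotCLM θ) x :=
  coe_rotCLM θ ▸ (rotCLM θ).hasFDerivAt

lemma ContinuousLinearMap.apply_prodMk {E : Type*} [AddCommMonoid E] [Module ℝ E]
    [TopologicalSpace E] (L : ℝ × ℝ →L[ℝ] E) (a b : ℝ) :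
    L (a, b) = a • L (1, 0) + b • L (0, 1) := by
  rw [← map_smul, ← map_smul, ← map_add]
  simp

lemma fderiv_comp_rot_apply {f : ℝ × ℝ → ℝ} {θ : ℝ} {x : ℝ × ℝ}
    (hf : DifferentiableAt ℝ f (rot θ x)) (v : ℝ × ℝ) :
    fderiv ℝ (fun y => f (rot θ y)) x v = fderiv ℝ f (rot θ x) (rot θ v) := by
  rw [show (fun y => f (rot θ y)) = f ∘ rot θ from rfl,
    (hf.hasFDerivAt.comp x (hasFDerivAt_rot θ x)).fderiv]
  simp [coe_rotCLM]

lemma pd1_comp_rot_neg {f : ℝ × ℝ → ℝ} {θ : ℝ} {x : ℝ × ℝ}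
    (hf : DifferentiableAt ℝ f (rot (-θ) x)) :
    pd1 (fun y => f (rot (-θ) y)) x
      = cos θ * pd1 f (rot (-θ) x) - sin θ * pd2 f (rot (-θ) x) := by
  rw [pd1, fderiv_comp_rot_apply hf, ContinuousLinearMap.apply_prodMk]
  simp [rot, pd1, pd2, sub_eq_add_neg]

lemma pd2_comp_rot_neg {f : ℝ × ℝ → ℝ} {θ : ℝ} {x : ℝ × ℝ}
    (hf : DifferentiableAt ℝ f (rot (-θ) x)) :
    pd2 (fun y => f (rot (-θ) y)) x
      = sin θ * pd1 f (rot (-θ) x) + cos θ * pd2 f (rot (-θ) x) := by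
  rw [pd2, fderiv_comp_rot_apply hf, ContinuousLinearMap.apply_prodMk]
  simp [rot, pd1, pd2]

lemma pd2_mul_sub_mul {f g : ℝ × ℝ → ℝ} {x : ℝ × ℝ}
    (hf : DifferentiableAt ℝ f x) (hg : DifferentiableAt ℝ g x) (a b : ℝ) :
    pd2 (fun y => a * f y - b * g y) x = a * pd2 f x - b * pd2 g x := by
  rw [pd2, ((hf.hasFDerivAt.const_mul a).fun_sub (hg.hasFDerivAt.const_mul b)).fderiv]
  simp [pd2]

lemma pd1_mul_add_mul {f g : ℝ × ℝ → ℝ} {x : ℝ × ℝ}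
    (hf : DifferentiableAt ℝ f x) (hg : DifferentiableAt ℝ g x) (a b : ℝ) :
    pd1 (fun y => a * f y + b * g y) x = a * pd1 f x + b * pd1 g x := by
  rw [pd1, ((hf.hasFDerivAt.const_mul a).fun_add (hg.hasFDerivAt.const_mul b)).fderiv]
  simp [pd1]

lemma curlC_gstar (k θ : ℝ) {u : ℝ × ℝ → Fin 6 → ℝ} {x : ℝ × ℝ}
    (hu : ∀ i, DifferentiableAt ℝ (fun y => u y i) (rot (-θ) x)) :
    curlC k (gstar θ u) x = blockRot θ (curlC k u (rot (-θ) x)) := by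
  have hrot : ∀ i, DifferentiableAt ℝ (fun y => u (rot (-θ) y) i) x := fun i =>
    (hu i).comp x (hasFDerivAt_rot (-θ) x).differentiableAt
  ext i
  fin_cases i <;>
    simp only [curlC, gstar, blockRot, Fin.zero_eta, Fin.mk_one, Fin.reduceFinMk, Matrix.cons_val,
      pd1_mul_add_mul (hrot _) (hrot _), pd2_mul_sub_mul (hrot _) (hrot _),
      pd1_comp_rot_neg (hu _), pd2_comp_rot_neg (hu _)] <;>
    grind [sin_sq_add_cos_sq]

theorem stmt12_general (k : ℝ) (u : ℝ × ℝ → Fin 6 → ℝ)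
    (hu : ∀ i, ContDiff ℝ 1 fun x => u x i) (θ : ℝ) (x : ℝ × ℝ) :
    Real.sqrt (∑ i, (curlC k (gstar θ u) x i) ^ 2)
      = Real.sqrt (∑ i, (curlC k u (rot (-θ) x) i) ^ 2) := by
  rw [curlC_gstar k θ fun i => ((hu i).differentiable one_ne_zero).differentiableAt,
    sum_sq_blockRot]

/-- `|curl∘ (g ⋆ u) (x)| = |curl∘ u (g⁻¹ x)|` for every rotation `g` and every `x`. -/
theorem stmt12 (k : ℝ) (hk : k ≠ 0) (u : ℝ × ℝ → Fin 6 → ℝ)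
    (hu : ∀ i, ContDiff ℝ 1 fun x => u x i) (θ : ℝ) (x : ℝ × ℝ) :
    Real.sqrt (∑ i, (curlC k (gstar θ u) x i) ^ 2)
      = Real.sqrt (∑ i, (curlC k u (rot (-θ) x) i) ^ 2) :=
  stmt12_general k u hu θ x
end

section
/- Fix k ∈ ℝ, k ≠ 0. Let α, ᾱ₃ : ℝ² → ℝ be radial functions of class C¹, and let ᾱ₁, ᾱ₂, β, γ : ℝ² → ℝ be of class C¹. Define u_ρ(x) := (α(x)x₁, α(x)x₂, 0, ᾱ₁(x), ᾱ₂(x), ᾱ₃(x)), u_τ(x) := (−β(x)x₂, β(x)x₁, 0, 0, 0, 0), and u_ζ(x) := (0, 0, γ(x), 0, 0, 0). Then for every x ∈ ℝ², ⟨curl∘u_ρ(x), curl∘u_τ(x)⟩ = 0 and ⟨curl∘u_τ(x), curl∘u_ζ(x)⟩ = 0, where ⟨·,·⟩ is the Euclidean inner product on ℝ⁶. -/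
/-- A function on ℝ² is radial if it is invariant under all rotations. -/
def Radial (h : ℝ × ℝ → ℝ) : Prop := ∀ θ : ℝ, ∀ x : ℝ × ℝ, h (rot θ x) = h x

/-!
A radial function is constant along the orbit `θ ↦ rot θ x`, whose velocity at `θ = 0` is
`(-x₂, x₁)`; hence its angular derivative `x₁ ∂₂h − x₂ ∂₁h` vanishes. Computing the three curls,
`curl∘ u_τ = (0, 0, ∂₁(βx₁) + ∂₂(βx₂), kβx₁, kβx₂, 0)` and `curl∘ u_ζ = (∂₂γ, −∂₁γ, 0, 0, 0, 0)`
have disjoint supports, while the third component of `curl∘ u_ρ` is `x₂ ∂₁α − x₁ ∂₂α = 0` and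
its fourth and fifth components pair with those of `curl∘ u_τ` to `kβ (x₁ ∂₂ᾱ₃ − x₂ ∂₁ᾱ₃) = 0`.
-/

lemma hasDerivAt_rot_zero (x : ℝ × ℝ) : HasDerivAt (fun θ => rot θ x) (-x.2, x.1) 0 := by
  have h1 := ((Real.hasDerivAt_cos 0).const_mul x.1).sub ((Real.hasDerivAt_sin 0).const_mul x.2)
  have h2 := ((Real.hasDerivAt_sin 0).const_mul x.1).add ((Real.hasDerivAt_cos 0).const_mul x.2)
  simpa [rot] using h1.prodMk h2

lemma Radial.fderiv_apply_tangent_eq_zero {h : ℝ × ℝ → ℝ} (hr : Radial h) {x : ℝ × ℝ}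
    (hd : DifferentiableAt ℝ h x) : fderiv ℝ h x (-x.2, x.1) = 0 := by
  have hrot : rot 0 x = x := by simp [rot]
  have hF : HasFDerivAt h (fderiv ℝ h x) (rot 0 x) := by rw [hrot]; exact hd.hasFDerivAt
  have hcomp := hF.comp_hasDerivAt (0 : ℝ) (hasDerivAt_rot_zero x)
  have hconst : h ∘ (fun θ => rot θ x) = fun _ => h x := funext fun θ => hr θ x
  rw [hconst] at hcomp
  exact hcomp.unique (hasDerivAt_const 0 (h x))

lemma Radial.fst_mul_pd2_eq {h : ℝ × ℝ → ℝ} (hr : Radial h) {x : ℝ × ℝ}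
    (hd : DifferentiableAt ℝ h x) : x.1 * pd2 h x = x.2 * pd1 h x := by
  have h0 := hr.fderiv_apply_tangent_eq_zero hd
  have hsplit : ((-x.2, x.1) : ℝ × ℝ) = (-x.2) • ((1 : ℝ), (0 : ℝ)) + x.1 • ((0 : ℝ), (1 : ℝ)) := by
    simp
  rw [hsplit, map_add, map_smul, map_smul, smul_eq_mul, smul_eq_mul] at h0
  simp only [pd1, pd2]
  linarith

@[simp]
lemma pd1_const (c : ℝ) (x : ℝ × ℝ) : pd1 (fun _ => c) x = 0 := by
  simp [pd1]

@[simp]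
lemma pd2_const (c : ℝ) (x : ℝ × ℝ) : pd2 (fun _ => c) x = 0 := by
  simp [pd2]

lemma pd1_mul_snd {f : ℝ × ℝ → ℝ} {x : ℝ × ℝ} (hf : DifferentiableAt ℝ f x) :
    pd1 (fun y => f y * y.2) x = pd1 f x * x.2 := by
  have h := hf.hasFDerivAt.fun_mul (hasFDerivAt_snd (𝕜 := ℝ) (p := x))
  rw [pd1, h.fderiv]
  simp [pd1, mul_comm]

lemma pd2_mul_fst {f : ℝ × ℝ → ℝ} {x : ℝ × ℝ} (hf : DifferentiableAt ℝ f x) :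
    pd2 (fun y => f y * y.1) x = pd2 f x * x.1 := by
  have h := hf.hasFDerivAt.fun_mul (hasFDerivAt_fst (𝕜 := ℝ) (p := x))
  rw [pd2, h.fderiv]
  simp [pd2, mul_comm]

lemma curlC_tau (k : ℝ) (β : ℝ × ℝ → ℝ) (x : ℝ × ℝ) :
    curlC k (fun y => ![-(β y * y.2), β y * y.1, 0, 0, 0, 0]) x =
      ![0, 0, pd1 (fun y => β y * y.1) x - pd2 (fun y => -(β y * y.2)) x,
        k * (β x * x.1), k * (β x * x.2), 0] := by
  ext i; fin_cases i <;> simp [curlC]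

lemma curlC_zeta (k : ℝ) (γ : ℝ × ℝ → ℝ) (x : ℝ × ℝ) :
    curlC k (fun y => ![0, 0, γ y, 0, 0, 0]) x = ![pd2 γ x, -pd1 γ x, 0, 0, 0, 0] := by
  ext i; fin_cases i <;> simp [curlC]

lemma curlC_rho_two {a b1 b2 b3 : ℝ × ℝ → ℝ} (k : ℝ) {x : ℝ × ℝ}
    (har : Radial a) (ha : DifferentiableAt ℝ a x) :
    curlC k (fun y => ![a y * y.1, a y * y.2, 0, b1 y, b2 y, b3 y]) x 2 = 0 := by
  simp only [curlC, Matrix.cons_val, pd1_mul_snd ha, pd2_mul_fst ha]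
  linarith [har.fst_mul_pd2_eq ha]

theorem stmt15_general (k : ℝ)
    (a b3 b1 b2 β γ : ℝ × ℝ → ℝ)
    (ha : ContDiff ℝ 1 a)
    (hb3 : ContDiff ℝ 1 b3)
    (har : Radial a) (hb3r : Radial b3) :
    ∀ x : ℝ × ℝ,
      (∑ i, curlC k (fun y => ![a y * y.1, a y * y.2, 0, b1 y, b2 y, b3 y]) x i *
            curlC k (fun y => ![-(β y * y.2), β y * y.1, 0, 0, 0, 0]) x i = 0) ∧
      (∑ i, curlC k (fun y => ![-(β y * y.2), β y * y.1, 0, 0, 0, 0]) x i *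
            curlC k (fun y => ![0, 0, γ y, 0, 0, 0]) x i = 0) := by
  intro x
  refine ⟨?_, ?_⟩
  · rw [curlC_tau, Fin.sum_univ_six, curlC_rho_two k har (ha.differentiable one_ne_zero x)]
    simp only [curlC, Matrix.cons_val, Matrix.cons_val_zero, Matrix.cons_val_one, mul_zero,
      add_zero, zero_mul, zero_add]
    linear_combination (k * β x) * hb3r.fst_mul_pd2_eq (hb3.differentiable one_ne_zero x)
  · simp [curlC_tau, curlC_zeta, Fin.sum_univ_six]

/-- The curls of the components `u_ρ`, `u_τ`, `u_ζ` of a symmetric field are pointwise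
orthogonal: `⟨curl∘ u_ρ, curl∘ u_τ⟩ = ⟨curl∘ u_τ, curl∘ u_ζ⟩ = 0`. -/
theorem stmt15 (k : ℝ) (hk : k ≠ 0)
    (a b3 b1 b2 β γ : ℝ × ℝ → ℝ)
    (ha : ContDiff ℝ 1 a) (hb1 : ContDiff ℝ 1 b1) (hb2 : ContDiff ℝ 1 b2)
    (hb3 : ContDiff ℝ 1 b3) (hβ : ContDiff ℝ 1 β) (hγ : ContDiff ℝ 1 γ)
    (har : Radial a) (hb3r : Radial b3) :
    ∀ x : ℝ × ℝ,
      (∑ i, curlC k (fun y => ![a y * y.1, a y * y.2, 0, b1 y, b2 y, b3 y]) x i *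
            curlC k (fun y => ![-(β y * y.2), β y * y.1, 0, 0, 0, 0]) x i = 0) ∧
      (∑ i, curlC k (fun y => ![-(β y * y.2), β y * y.1, 0, 0, 0, 0]) x i *
            curlC k (fun y => ![0, 0, γ y, 0, 0, 0]) x i = 0) :=
  stmt15_general k a b3 b1 b2 β γ ha hb3 har hb3r
end

section
/- Fix k ∈ ℝ, k ≠ 0. Let u = (u₁,…,u₆) : ℝ² → ℝ⁶ be smooth, with each component uᵢ and each first partial derivative ∂ⱼuᵢ square-integrable on ℝ². Assume that curl∘u = 0 identically on ℝ², and that the divergence-type constraints ∂₁u₁ + ∂₂u₂ + k·u₆ = 0 and ∂₁u₄ + ∂₂u₅ − k·u₃ = 0 hold everywhere on ℝ². Then u = 0. -/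
open MeasureTheory

open scoped ENNReal NNReal

lemma contDiff_pd1 {f : ℝ × ℝ → ℝ} (hf : ContDiff ℝ (⊤ : ℕ∞) f) : ContDiff ℝ (⊤ : ℕ∞) (pd1 f) :=
  (ContinuousLinearMap.apply ℝ ℝ ((1,0) : ℝ × ℝ)).contDiff.comp (hf.fderiv_right (by simp))

lemma contDiff_pd2 {f : ℝ × ℝ → ℝ} (hf : ContDiff ℝ (⊤ : ℕ∞) f) : ContDiff ℝ (⊤ : ℕ∞) (pd2 f) :=
  (ContinuousLinearMap.apply ℝ ℝ ((0,1) : ℝ × ℝ)).contDiff.comp (hf.fderiv_right (by simp))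

lemma pd1_mul {f g : ℝ × ℝ → ℝ} {x : ℝ × ℝ} (hf : DifferentiableAt ℝ f x)
    (hg : DifferentiableAt ℝ g x) :
    pd1 (fun y => f y * g y) x = f x * pd1 g x + g x * pd1 f x := by
  unfold pd1; rw [fderiv_fun_mul hf hg]; simp

lemma pd2_mul {f g : ℝ × ℝ → ℝ} {x : ℝ × ℝ} (hf : DifferentiableAt ℝ f x)
    (hg : DifferentiableAt ℝ g x) :
    pd2 (fun y => f y * g y) x = f x * pd2 g x + g x * pd2 f x := by
  unfold pd2; rw [fderiv_fun_mul hf hg]; simp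

lemma memL2_mul_integrable {f g : ℝ × ℝ → ℝ} (hf : MemLp f 2 volume)
    (hg : MemLp g 2 volume) : Integrable (fun x => f x * g x) volume := by
  have h : (1 : ℝ≥0∞)/1 = 1/2 + 1/2 := by
    rw [ENNReal.div_add_div_same]; norm_num [ENNReal.div_self]
  exact memLp_one_iff_integrable.mp (by exact hg.smul (r := 1) hf)

lemma slice_bound (φ : ℝ → ℝ) (hφ : Continuous φ) (R : ℝ) (hR : 0 < R) (w : ℝ≥0∞)
    (hw : ∫⁻ s, (‖φ s‖₊ : ℝ≥0∞) = w) (hwfin : w ≠ ⊤) :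
    |∫ y in -R..R, φ y| ≤ w.toReal := by
  have hab : (-R) ≤ R := by linarith
  have h1 : |∫ y in -R..R, φ y| ≤ ∫ y in -R..R, |φ y| :=
    intervalIntegral.abs_integral_le_integral_abs hab
  have h2 : (∫ y in -R..R, |φ y|) = ∫ y in Set.Ioc (-R) R, |φ y| := by
    rw [intervalIntegral.integral_of_le hab]
  have h3 : (∫ y in Set.Ioc (-R) R, |φ y|) =
      (∫⁻ y in Set.Ioc (-R) R, (‖φ y‖₊ : ℝ≥0∞)).toReal := by
    have := MeasureTheory.integral_norm_eq_lintegral_enorm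
      (μ := volume.restrict (Set.Ioc (-R) R)) (f := φ) (hφ.aestronglyMeasurable.restrict)
    simp only [Real.norm_eq_abs] at this; exact this
  have h4 : (∫⁻ y in Set.Ioc (-R) R, (‖φ y‖₊ : ℝ≥0∞)) ≤ w := by
    rw [← hw]; exact lintegral_mono' Measure.restrict_le_self le_rfl
  calc |∫ y in -R..R, φ y| ≤ _ := h1
    _ = _ := h2
    _ = _ := h3
    _ ≤ w.toReal := ENNReal.toReal_mono hwfin h4

lemma exists_small (V : ℝ → ℝ≥0∞) (hV : ∫⁻ t, V t ≠ ⊤) (ε : ℝ) (hε : 0 < ε) (R₀ : ℝ) :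
    ∃ R, R₀ ≤ R ∧ V R < ENNReal.ofReal ε := by
  by_contra hcon
  push_neg at hcon
  have : ∫⁻ t in Set.Ici R₀, ENNReal.ofReal ε ≤ ∫⁻ t in Set.Ici R₀, V t :=
    setLIntegral_mono' measurableSet_Ici fun x hx => hcon x hx
  rw [setLIntegral_const] at this
  have hvol : volume (Set.Ici R₀) = ⊤ := Real.volume_Ici
  rw [hvol, ENNReal.mul_top (by simp [ENNReal.ofReal_eq_zero, not_le, hε])] at this
  exact hV (top_le_iff.mp (this.trans (lintegral_mono' Measure.restrict_le_self le_rfl)))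

lemma aux_vanish (c : ℝ) (hc : 0 < c) (f : ℝ × ℝ → ℝ) (hf : ContDiff ℝ (⊤ : ℕ∞) f)
    (h0 : MemLp f 2 volume) (h1 : MemLp (pd1 f) 2 volume) (h2 : MemLp (pd2 f) 2 volume)
    (hlap : ∀ x, pd1 (pd1 f) x + pd2 (pd2 f) x = c * f x) :
    ∀ x, f x = 0 := by
  have hfc := hf.continuous
  have hp1 : ContDiff ℝ (⊤ : ℕ∞) (pd1 f) := contDiff_pd1 hf
  have hp2 : ContDiff ℝ (⊤ : ℕ∞) (pd2 f) := contDiff_pd2 hf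
  set F : ℝ × ℝ → ℝ := fun x => f x * pd1 f x with hFdef
  set G : ℝ × ℝ → ℝ := fun x => f x * pd2 f x with hGdef
  have hFcont : Continuous F := hfc.mul hp1.continuous
  have hGcont : Continuous G := hfc.mul hp2.continuous
  have hFi : Integrable F volume := memL2_mul_integrable h0 h1
  have hGi : Integrable G volume := memL2_mul_integrable h0 h2
  have hdf : Differentiable ℝ f := hf.differentiable (by simp)
  have hdp1 : Differentiable ℝ (pd1 f) := hp1.differentiable (by simp)
  have hdp2 : Differentiable ℝ (pd2 f) := hp2.differentiable (by simp)
  have hdF : Differentiable ℝ F := hdf.mul hdp1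
  have hdG : Differentiable ℝ G := hdf.mul hdp2
  set e : ℝ × ℝ → ℝ := fun x => pd1 f x ^ 2 + pd2 f x ^ 2 + c * f x ^ 2 with hedef
  have hecont : Continuous e :=
    ((hp1.continuous.pow 2).add (hp2.continuous.pow 2)).add (continuous_const.mul (hfc.pow 2))
  have he_nonneg : ∀ x, 0 ≤ e x := fun x =>
    add_nonneg (add_nonneg (sq_nonneg _) (sq_nonneg _)) (mul_nonneg hc.le (sq_nonneg _))
  have key : ∀ x, fderiv ℝ F x (1,0) + fderiv ℝ G x (0,1) = e x := by
    intro x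
    show pd1 (fun y => f y * pd1 f y) x + pd2 (fun y => f y * pd2 f y) x = e x
    rw [pd1_mul (hdf x) (hdp1 x), pd2_mul (hdf x) (hdp2 x)]
    have h := hlap x
    show _ = pd1 f x ^ 2 + pd2 f x ^ 2 + c * f x ^ 2
    linear_combination f x * h
  have hIeOn : ∀ R : ℝ, IntegrableOn e (Set.Icc ((-R,-R) : ℝ×ℝ) (R,R)) volume := fun R =>
    hecont.continuousOn.integrableOn_compact isCompact_Icc
  have hdiv : ∀ R : ℝ, 0 < R →
      (∫ x in Set.Icc ((-R,-R) : ℝ×ℝ) ((R,R) : ℝ×ℝ), e x) =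
        (((∫ x in -R..R, G (x, R)) - ∫ x in -R..R, G (x, -R)) +
            ∫ y in -R..R, F (R, y)) - ∫ y in -R..R, F (-R, y) := by
    intro R hR
    have hle : ((-R,-R) : ℝ×ℝ) ≤ (R,R) := ⟨by dsimp; linarith, by dsimp; linarith⟩
    have Hi : IntegrableOn (fun x => fderiv ℝ F x (1,0) + fderiv ℝ G x (0,1))
        (Set.Icc ((-R,-R) : ℝ×ℝ) (R,R)) volume := by
      simp only [key]; exact hIeOn R
    have hDT := MeasureTheory.integral_divergence_prod_Icc_of_hasFDerivAt_off_countable_of_le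
      F G (fun x => fderiv ℝ F x) (fun x => fderiv ℝ G x) ((-R,-R) : ℝ×ℝ) ((R,R) : ℝ×ℝ) hle ∅
      Set.countable_empty hFcont.continuousOn hGcont.continuousOn
      (fun x _ => (hdF x).hasFDerivAt) (fun x _ => (hdG x).hasFDerivAt) Hi
    simp only [key] at hDT
    simpa using hDT

  -- boundary smallness machinery
  set W1 : ℝ → ℝ≥0∞ := fun t => ∫⁻ s, (‖F (t, s)‖₊ : ℝ≥0∞) with hW1def
  set W2 : ℝ → ℝ≥0∞ := fun t => ∫⁻ s, (‖G (s, t)‖₊ : ℝ≥0∞) with hW2def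
  have hW1meas : Measurable W1 :=
    Measurable.lintegral_prod_right' (hFcont.measurable.nnnorm.coe_nnreal_ennreal)
  have hW2meas : Measurable W2 :=
    Measurable.lintegral_prod_left' (hGcont.measurable.nnnorm.coe_nnreal_ennreal)
  have hW1tot : (∫⁻ t, W1 t) = ∫⁻ p, (‖F p‖₊ : ℝ≥0∞) := by
    rw [MeasureTheory.Measure.volume_eq_prod, lintegral_prod]
    exact (hFcont.measurable.nnnorm.coe_nnreal_ennreal).aemeasurable
  have hW2tot : (∫⁻ t, W2 t) = ∫⁻ p, (‖G p‖₊ : ℝ≥0∞) := by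
    rw [MeasureTheory.Measure.volume_eq_prod, lintegral_prod_symm]
    exact (hGcont.measurable.nnnorm.coe_nnreal_ennreal).aemeasurable
  have hW1fin : (∫⁻ t, W1 t) ≠ ⊤ := by rw [hW1tot]; exact hFi.2.ne
  have hW2fin : (∫⁻ t, W2 t) ≠ ⊤ := by rw [hW2tot]; exact hGi.2.ne
  have hW1negfin : (∫⁻ t, W1 (-t)) ≠ ⊤ := by
    rw [(Measure.measurePreserving_neg volume).lintegral_comp hW1meas]; exact hW1fin
  have hW2negfin : (∫⁻ t, W2 (-t)) ≠ ⊤ := by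
    rw [(Measure.measurePreserving_neg volume).lintegral_comp hW2meas]; exact hW2fin
  set V : ℝ → ℝ≥0∞ := fun t => W1 t + W1 (-t) + W2 t + W2 (-t) with hVdef
  have hW1negmeas : Measurable fun t => W1 (-t) := hW1meas.comp measurable_neg
  have hW2negmeas : Measurable fun t => W2 (-t) := hW2meas.comp measurable_neg
  have hVfin : (∫⁻ t, V t) ≠ ⊤ := by
    have e1 : (∫⁻ t, V t) = (∫⁻ t, W1 t) + (∫⁻ t, W1 (-t)) + (∫⁻ t, W2 t) + ∫⁻ t, W2 (-t) := by
      rw [hVdef]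
      rw [lintegral_add_left (f := fun t => W1 t + W1 (-t) + W2 t) ((hW1meas.add hW1negmeas).add hW2meas),
        lintegral_add_left (f := fun t => W1 t + W1 (-t)) (hW1meas.add hW1negmeas), lintegral_add_left hW1meas]
    rw [e1]
    exact ENNReal.add_ne_top.mpr ⟨ENNReal.add_ne_top.mpr
      ⟨ENNReal.add_ne_top.mpr ⟨hW1fin, hW1negfin⟩, hW2fin⟩, hW2negfin⟩
  -- final argument
  intro x₀
  by_contra hx0
  have hfx2 : 0 < f x₀ ^ 2 := pow_two_pos_of_ne_zero hx0
  set η : ℝ := f x₀ ^ 2 / 2 with hηdef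
  have hη : 0 < η := by positivity
  have hU : IsOpen {x : ℝ × ℝ | η < f x ^ 2} := isOpen_lt continuous_const (hfc.pow 2)
  have hx₀U : x₀ ∈ {x : ℝ × ℝ | η < f x ^ 2} := by simp only [Set.mem_setOf_eq, hηdef]; linarith
  obtain ⟨r, hr0, hball⟩ := Metric.isOpen_iff.mp hU x₀ hx₀U
  set R₁ : ℝ := ‖x₀‖ + r + 1 with hR₁def
  have hR₁ : 0 < R₁ := by positivity
  have hsub : Metric.ball x₀ r ⊆ Set.Icc ((-R₁,-R₁) : ℝ×ℝ) (R₁,R₁) := by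
    intro z hz
    have h1 : ‖z - x₀‖ < r := by rwa [Metric.mem_ball, dist_eq_norm] at hz
    have h2 : ‖z‖ ≤ ‖x₀‖ + r := by
      calc ‖z‖ = ‖x₀ + (z - x₀)‖ := by rw [add_sub_cancel]
        _ ≤ ‖x₀‖ + ‖z - x₀‖ := norm_add_le _ _
        _ ≤ ‖x₀‖ + r := by linarith
    have hz1 : |z.1| ≤ ‖x₀‖ + r := le_trans (norm_fst_le z) h2
    have hz2 : |z.2| ≤ ‖x₀‖ + r := le_trans (norm_snd_le z) h2
    obtain ⟨hz1a, hz1b⟩ := abs_le.mp hz1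
    obtain ⟨hz2a, hz2b⟩ := abs_le.mp hz2
    exact ⟨⟨by dsimp; linarith, by dsimp; linarith⟩, ⟨by dsimp; linarith, by dsimp; linarith⟩⟩
  have hballpos : 0 < (volume (Metric.ball x₀ r)).toReal :=
    ENNReal.toReal_pos (Metric.measure_ball_pos volume x₀ hr0).ne' measure_ball_lt_top.ne
  set δ : ℝ := c * η * (volume (Metric.ball x₀ r)).toReal with hδdef
  have hδ : 0 < δ := by positivity
  -- lower bound
  have hlow : δ ≤ ∫ x in Set.Icc ((-R₁,-R₁) : ℝ×ℝ) (R₁,R₁), e x := by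
    have hball_int : IntegrableOn e (Metric.ball x₀ r) volume := (hIeOn R₁).mono_set hsub
    have step1 : (∫ _x in Metric.ball x₀ r, (c * η)) ≤ ∫ x in Metric.ball x₀ r, e x := by
      refine setIntegral_mono_on (integrableOn_const measure_ball_lt_top.ne)
        hball_int measurableSet_ball (fun x hx => ?_)
      have hx' : η < f x ^ 2 := hball hx
      have h3 : c * η ≤ c * f x ^ 2 := mul_le_mul_of_nonneg_left hx'.le hc.le
      have := add_nonneg (sq_nonneg (pd1 f x)) (sq_nonneg (pd2 f x))
      rw [hedef]; dsimp only; linarith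
    have step2 : (∫ x in Metric.ball x₀ r, e x) ≤
        ∫ x in Set.Icc ((-R₁,-R₁) : ℝ×ℝ) (R₁,R₁), e x :=
      setIntegral_mono_set (hIeOn R₁) (Filter.Eventually.of_forall he_nonneg)
        (HasSubset.Subset.eventuallyLE hsub)
    have hconst : (∫ _x in Metric.ball x₀ r, (c * η)) = δ := by
      rw [setIntegral_const, smul_eq_mul, hδdef, measureReal_def]; ring
    linarith
  -- upper bound
  obtain ⟨R, hRR₁, hVR⟩ := exists_small V hVfin (δ/4) (by linarith) R₁
  have hR : 0 < R := lt_of_lt_of_le hR₁ hRR₁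
  have hVRfin : V R ≠ ⊤ := (lt_of_lt_of_le hVR le_top).ne
  have hto : (V R).toReal < δ/4 := by
    have h := ENNReal.toReal_strict_mono ENNReal.ofReal_ne_top hVR
    rwa [ENNReal.toReal_ofReal (by linarith)] at h
  have hb1 : |∫ y in -R..R, F (R, y)| ≤ (W1 R).toReal :=
    slice_bound _ (hFcont.comp (Continuous.prodMk_right R)) R hR _ rfl
      (fun h => hVRfin (by rw [hVdef]; dsimp only; rw [h]; simp))
  have hb2 : |∫ y in -R..R, F (-R, y)| ≤ (W1 (-R)).toReal :=
    slice_bound _ (hFcont.comp (Continuous.prodMk_right (-R))) R hR _ rfl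
      (fun h => hVRfin (by rw [hVdef]; dsimp only; rw [h]; simp))
  have hb3 : |∫ x in -R..R, G (x, R)| ≤ (W2 R).toReal :=
    slice_bound _ (hGcont.comp (continuous_id.prodMk continuous_const)) R hR _ rfl
      (fun h => hVRfin (by rw [hVdef]; dsimp only; rw [h]; simp))
  have hb4 : |∫ x in -R..R, G (x, -R)| ≤ (W2 (-R)).toReal :=
    slice_bound _ (hGcont.comp (continuous_id.prodMk continuous_const)) R hR _ rfl
      (fun h => hVRfin (by rw [hVdef]; dsimp only; rw [h]; simp))
  have hWle : ∀ w : ℝ≥0∞, w ≤ V R → w.toReal ≤ (V R).toReal := fun w hw =>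
    ENNReal.toReal_mono hVRfin hw
  have ht1 : (W1 R).toReal ≤ (V R).toReal :=
    hWle _ (le_add_right (le_add_right (le_add_right le_rfl)))
  have ht2 : (W1 (-R)).toReal ≤ (V R).toReal :=
    hWle _ (le_add_right (le_add_right le_add_self))
  have ht3 : (W2 R).toReal ≤ (V R).toReal := hWle _ (le_add_right le_add_self)
  have ht4 : (W2 (-R)).toReal ≤ (V R).toReal := hWle _ le_add_self
  -- monotonicity of the energy
  have hmono : (∫ x in Set.Icc ((-R₁,-R₁) : ℝ×ℝ) (R₁,R₁), e x) ≤
      ∫ x in Set.Icc ((-R,-R) : ℝ×ℝ) (R,R), e x := by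
    refine setIntegral_mono_set (hIeOn R) (Filter.Eventually.of_forall he_nonneg)
      (HasSubset.Subset.eventuallyLE (Set.Icc_subset_Icc ?_ ?_))
    · exact ⟨by dsimp; linarith, by dsimp; linarith⟩
    · exact ⟨by dsimp; linarith, by dsimp; linarith⟩
  have hEeq := hdiv R hR
  obtain ⟨h1a, h1b⟩ := abs_le.mp hb1
  obtain ⟨h2a, h2b⟩ := abs_le.mp hb2
  obtain ⟨h3a, h3b⟩ := abs_le.mp hb3
  obtain ⟨h4a, h4b⟩ := abs_le.mp hb4
  linarith

lemma pd1_const_mul {g : ℝ × ℝ → ℝ} {x : ℝ × ℝ} (hg : DifferentiableAt ℝ g x) (c : ℝ) :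
    pd1 (fun y => c * g y) x = c * pd1 g x := by
  unfold pd1; rw [fderiv_const_mul hg]; simp

lemma pd2_const_mul {g : ℝ × ℝ → ℝ} {x : ℝ × ℝ} (hg : DifferentiableAt ℝ g x) (c : ℝ) :
    pd2 (fun y => c * g y) x = c * pd2 g x := by
  unfold pd2; rw [fderiv_const_mul hg]; simp


/-- A smooth field `u : ℝ² → ℝ⁶` with square-integrable components and first derivatives,
with `curl∘ u = 0` and satisfying the divergence constraints, vanishes identically. -/
theorem stmt19 (k : ℝ) (hk : k ≠ 0) (u : ℝ × ℝ → Fin 6 → ℝ)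
    (hsmooth : ∀ i, ContDiff ℝ (⊤ : ℕ∞) fun x => u x i)
    (hL2 : ∀ i, MemLp (fun x => u x i) 2 volume)
    (hL2' : ∀ i, MemLp (pd1 fun x => u x i) 2 volume ∧
                 MemLp (pd2 fun x => u x i) 2 volume)
    (hcurl : ∀ x : ℝ × ℝ, curlC k u x = 0)
    (hdiv1 : ∀ x : ℝ × ℝ, pd1 (fun y => u y 0) x + pd2 (fun y => u y 1) x + k * u x 5 = 0)
    (hdiv2 : ∀ x : ℝ × ℝ, pd1 (fun y => u y 3) x + pd2 (fun y => u y 4) x - k * u x 2 = 0) :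
    ∀ x : ℝ × ℝ, u x = 0 := by
  have hk2 : (0:ℝ) < k ^ 2 := by positivity
  have hdiff : ∀ (i : Fin 6) (x : ℝ × ℝ), DifferentiableAt ℝ (fun y => u y i) x := fun i x =>
    (hsmooth i).differentiable (by simp) x
  have e0 : ∀ x, pd2 (fun y => u y 2) x = k * u x 4 := by
    intro x; have h := congr_fun (hcurl x) 0
    simp [curlC, sub_eq_zero] at h; linarith
  have e1 : ∀ x, pd1 (fun y => u y 2) x = k * u x 3 := by
    intro x; have h := congr_fun (hcurl x) 1
    simp [curlC, sub_eq_zero] at h; linarith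
  have e3 : ∀ x, pd2 (fun y => u y 5) x = -(k * u x 1) := by
    intro x; have h := congr_fun (hcurl x) 3
    simp [curlC] at h; linarith
  have e4 : ∀ x, pd1 (fun y => u y 5) x = -(k * u x 0) := by
    intro x; have h := congr_fun (hcurl x) 4
    simp [curlC, sub_eq_zero] at h; linarith
  -- laplacian for u₂ (index 2)
  have hp1f2 : pd1 (fun y => u y 2) = fun x => k * u x 3 := funext e1
  have hp2f2 : pd2 (fun y => u y 2) = fun x => k * u x 4 := funext e0
  have hlap2 : ∀ x, pd1 (pd1 fun y => u y 2) x + pd2 (pd2 fun y => u y 2) x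
      = k ^ 2 * u x 2 := by
    intro x
    rw [hp1f2, hp2f2, pd1_const_mul (hdiff 3 x) k, pd2_const_mul (hdiff 4 x) k]
    linear_combination k * hdiv2 x
  have hp1f5 : pd1 (fun y => u y 5) = fun x => (-k) * u x 0 :=
    funext fun x => by rw [e4 x]; ring
  have hp2f5 : pd2 (fun y => u y 5) = fun x => (-k) * u x 1 :=
    funext fun x => by rw [e3 x]; ring
  have hlap5 : ∀ x, pd1 (pd1 fun y => u y 5) x + pd2 (pd2 fun y => u y 5) x
      = k ^ 2 * u x 5 := by
    intro x
    rw [hp1f5, hp2f5, pd1_const_mul (hdiff 0 x) (-k), pd2_const_mul (hdiff 1 x) (-k)]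
    linear_combination (-k) * hdiv1 x
  have hf2 : ∀ x, u x 2 = 0 :=
    aux_vanish (k^2) hk2 _ (hsmooth 2) (hL2 2) (hL2' 2).1 (hL2' 2).2 hlap2
  have hf5 : ∀ x, u x 5 = 0 :=
    aux_vanish (k^2) hk2 _ (hsmooth 5) (hL2 5) (hL2' 5).1 (hL2' 5).2 hlap5
  have hz2 : (fun y => u y 2) = fun _ => (0:ℝ) := funext hf2
  have hz5 : (fun y => u y 5) = fun _ => (0:ℝ) := funext hf5
  have hpz1 : ∀ x : ℝ × ℝ, pd1 (fun _ => (0:ℝ)) x = 0 := fun x => by simp [pd1]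
  have hpz2 : ∀ x : ℝ × ℝ, pd2 (fun _ => (0:ℝ)) x = 0 := fun x => by simp [pd2]
  intro x
  have h3 : u x 3 = 0 := by
    have := e1 x; rw [hz2, hpz1] at this
    exact (mul_eq_zero.mp this.symm).resolve_left hk
  have h4 : u x 4 = 0 := by
    have := e0 x; rw [hz2, hpz2] at this
    exact (mul_eq_zero.mp this.symm).resolve_left hk
  have h0 : u x 0 = 0 := by
    have := e4 x; rw [hz5, hpz1] at this
    have : k * u x 0 = 0 := by linarith
    exact (mul_eq_zero.mp this).resolve_left hk
  have h1 : u x 1 = 0 := by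
    have := e3 x; rw [hz5, hpz2] at this
    have : k * u x 1 = 0 := by linarith
    exact (mul_eq_zero.mp this).resolve_left hk
  funext i
  fin_cases i
  · exact h0
  · exact h1
  · exact hf2 x
  · exact h3
  · exact h4
  · exact hf5 x
end
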